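/- Let σ : A* → A* be an aperiodic primitive morphism with admissible fixed point x ∈ A^ℤ and d = #A. Then the factor complexity of x satisfies p_x(n) ≤ |σ|^{4d²}·n for all n ≥ 1. -/

import Mathlib

open List

/-- Extension of a substitution to words. -/
def applyW {A : Type*} (σ : A → List A) (w : List A) : List A := w.flatMap σ

/-- `σⁿ` as a map on letters. -/
def powL {A : Type*} (σ : A → List A) (n : ℕ) (a : A) : List A := (applyW σ)^[n] [a]

/-- `σⁿ` as a map on words. -/
def iterW {A : Type*} (σ : A → List A) (n : ℕ) (w : List A) : List A := (applyW σ)^[n] w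

/-- A substitution is non-erasing if no letter maps to the empty word. -/
def NonErasing {A : Type*} (σ : A → List A) : Prop := ∀ a, σ a ≠ []

/-- A substitution is primitive if some power maps any letter to a word containing
every letter. -/
def PrimitiveSub {A : Type*} (σ : A → List A) : Prop :=
  ∃ k : ℕ, ∀ b c : A, b ∈ powL σ k c

/-- `σ` is prolongable on `a` if `σ a = a u` with `u` nonempty. -/
def Prolongable {A : Type*} (σ : A → List A) (a : A) : Prop :=
  ∃ u : List A, u ≠ [] ∧ σ a = a :: u

/-- `|σⁿ|`, the maximal length of the image of a letter under `σⁿ`. -/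
def maxLen {A : Type*} [Fintype A] (σ : A → List A) (n : ℕ) : ℕ :=
  Finset.univ.sup fun a => (powL σ n a).length

/-- `⟨σⁿ⟩`, the minimal length of the image of a letter under `σⁿ`. -/
def minLen {A : Type*} [Fintype A] [Nonempty A] (σ : A → List A) (n : ℕ) : ℕ :=
  Finset.univ.inf' Finset.univ_nonempty fun a => (powL σ n a).length

/-- The factor `x_{[i,j)}` of a two-sided sequence. -/
def seg {A : Type*} (x : ℤ → A) (i j : ℤ) : List A :=
  (List.range (j - i).toNat).map fun t => x (i + t)

/-- `w` is a factor of the two-sided sequence `x`. -/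
def FactorOf {A : Type*} (x : ℤ → A) (w : List A) : Prop :=
  ∃ i : ℤ, w = seg x i (i + w.length)

/-- The language of a substitution: words occurring in some `σⁿ(c)`. -/
def LangOf {A : Type*} (σ : A → List A) (w : List A) : Prop :=
  ∃ n : ℕ, ∃ c : A, w <:+: powL σ n c

/-- The map `f^{(1)}` associated with the substitution `τ` and the sequence `x`;
the map `f^{(p)}` of `σ` is obtained as `F (powL σ p) x`. -/
def F {A : Type*} (τ : A → List A) (x : ℤ → A) (i : ℤ) : ℤ :=
  if 0 ≤ i then (((seg x 0 i).flatMap τ).length : ℤ)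
  else -(((seg x i 0).flatMap τ).length : ℤ)

/-- `x` is a (two-sided) fixed point of `τ`:  `τ (x i)` is the block of `x`
between `f^{(1)}(i)` and `f^{(1)}(i+1)`. -/
def IsFixedPoint {A : Type*} (τ : A → List A) (x : ℤ → A) : Prop :=
  ∀ i : ℤ, seg x (F τ x i) (F τ x (i + 1)) = τ (x i)

/-- `x` is an admissible fixed point of `τ`: it is a fixed point and the word
`x₋₁x₀` occurs in some `τⁿ(c)`. -/
def Admissible {A : Type*} (τ : A → List A) (x : ℤ → A) : Prop :=
  IsFixedPoint τ x ∧ ∃ n : ℕ, ∃ c : A, [x (-1), x 0] <:+: powL τ n c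

/-- `τ` is recognizable on `x` with constant `L`. -/
def RecogWith {A : Type*} (τ : A → List A) (x : ℤ → A) (L : ℤ) : Prop :=
  0 < L ∧ ∀ i m : ℤ,
    seg x (m - L) (m + L + 1) = seg x (F τ x i - L) (F τ x i + L + 1) →
    ∃ j : ℤ, m = F τ x j ∧ x i = x j

/-- `x` is `k`-power-free: no nonempty word `w` has `w^k` as a factor of `x`. -/
def PowerFree {A : Type*} (x : ℤ → A) (k : ℕ) : Prop :=
  ∀ w : List A, w ≠ [] → ¬ FactorOf x (List.replicate k w).flatten

/-- `x` is recurrent: every factor occurs infinitely many times. -/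
def Recurrent {A : Type*} (x : ℤ → A) : Prop :=
  ∀ w : List A, FactorOf x w → ∀ N : ℤ, ∃ i : ℤ, N ≤ i ∧ w = seg x i (i + w.length)

/-- Number of occurrences of `u` in `w`. -/
def occCount {A : Type*} [DecidableEq A] (u w : List A) : ℕ :=
  (List.range (w.length + 1)).countP fun i => decide (u <+: w.drop i)

/-- `r` is a return word to `u` in `x`. -/
def ReturnWordOf {A : Type*} [DecidableEq A] (x : ℤ → A) (u r : List A) : Prop :=
  FactorOf x (r ++ u) ∧ u <+: (r ++ u) ∧ occCount u (r ++ u) = 2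

/-- `r` is a return word to `u` in the language of `σ`. -/
def ReturnWordLang {A : Type*} [DecidableEq A] (σ : A → List A) (u r : List A) : Prop :=
  LangOf σ (r ++ u) ∧ u <+: (r ++ u) ∧ occCount u (r ++ u) = 2

/-- `x` is linearly recurrent with constant `K`. -/
def LinRec {A : Type*} [DecidableEq A] (x : ℤ → A) (K : ℕ) : Prop :=
  Recurrent x ∧ ∀ u r : List A, FactorOf x u → ReturnWordOf x u r → r.length ≤ K * u.length

/-- `x` is aperiodic (not periodic). -/
def AperiodicSeq {A : Type*} (x : ℤ → A) : Prop :=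
  ¬ ∃ p : ℤ, 0 < p ∧ ∀ i : ℤ, x (i + p) = x i

/-- Factor complexity of `x`. -/
noncomputable def complexity {A : Type*} (x : ℤ → A) (n : ℕ) : ℕ :=
  Set.ncard {w : List A | FactorOf x w ∧ w.length = n}

/-!
Let `τ = σ^N` for the least `N` with `⟨σ^N⟩ ≥ n`. As `x` is also a fixed point of `τ`, it is the
concatenation of the blocks `τ(x_j)`, each of length at least `n`; hence every factor of length `n`
starts inside some block `τ(x_j)` and ends inside `τ(x_j) τ(x_{j+1})`, which leaves at most
`d² |σ^N|` possibilities. The fixed point gives a loop `x₀ ∈ σ(x₀)`, and with it every letter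
reaches `x₀`, and is reached from `x₀`, in exactly `d` steps; so `2d` is a primitivity index and
`|σ^N| ≤ |σ|^{2d} ⟨σ^N⟩ ≤ |σ|^{2d+1} n`, the last step by minimality of `N`. Finally
`d² |σ|^{2d+1} ≤ |σ|^{4d²}` because `|σ| ≥ 2`.
-/

theorem iterate_subset_iterate_card {α : Type*} [Fintype α] {G : Set α → Set α}
    (hG : Monotone G) {s : Set α} (hs : s ⊆ G s) (m : ℕ) :
    G^[m] s ⊆ G^[Fintype.card α] s := by
  have hmono : Monotone fun n => G^[n] s := hG.monotone_iterate_of_le_map hs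
  obtain ⟨j, hj, hfix⟩ : ∃ j ≤ Fintype.card α, G^[j + 1] s = G^[j] s := by
    by_contra! hne
    have hcard : ∀ j ≤ Fintype.card α + 1, j ≤ (G^[j] s).ncard := by
      intro j
      induction j with
      | zero => simp
      | succ j ih =>
        intro hj
        have hlt : G^[j] s ⊂ G^[j + 1] s :=
          (hmono j.le_succ).ssubset_of_ne (hne j (by omega)).symm
        have := Set.ncard_lt_ncard hlt
        omega
    have := (hcard _ le_rfl).trans (Set.ncard_le_card _)
    rw [Nat.card_eq_fintype_card] at this
    omega
  rcases le_or_gt m (Fintype.card α) with hm | hm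
  · exact hmono hm
  · have hfix' : Function.IsFixedPt G^[m - j] (G^[j] s) := by
      refine Function.IsFixedPt.iterate ?_ _
      rwa [Function.IsFixedPt, ← Function.iterate_succ_apply' G j]
    calc G^[m] s = G^[m - j] (G^[j] s) := by rw [← Function.iterate_add_apply]; congr; omega
      _ = G^[j] s := hfix'
      _ ⊆ G^[Fintype.card α] s := hmono hj

theorem exists_le_and_le_mul_of_succ_le_mul {u : ℕ → ℕ} {L n : ℕ}
    (hu : ∀ m, u (m + 1) ≤ u m * L) (h0 : u 0 ≤ L * n) (hn : ∃ N, n ≤ u N) :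
    ∃ N, n ≤ u N ∧ u N ≤ L * n := by
  classical
  refine ⟨Nat.find hn, Nat.find_spec hn, ?_⟩
  rcases hN : Nat.find hn with _ | M
  · exact h0
  · have hM : u M < n := not_le.mp (Nat.find_min hn (by omega))
    calc u (M + 1) ≤ u M * L := hu M
      _ ≤ n * L := Nat.mul_le_mul_right _ hM.le
      _ = L * n := Nat.mul_comm _ _

theorem length_flatMap_le {α β : Type*} {f : α → List β} {M : ℕ} (hf : ∀ a, (f a).length ≤ M)
    (l : List α) : (l.flatMap f).length ≤ l.length * M := by
  have := sum_le_card_nsmul (l.map fun a => (f a).length) M fun _ hy => by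
    obtain ⟨a, -, rfl⟩ := mem_map.mp hy
    exact hf a
  simpa [length_flatMap] using this

theorem le_length_flatMap {α β : Type*} {f : α → List β} {m : ℕ} (hf : ∀ a, m ≤ (f a).length)
    (l : List α) : l.length * m ≤ (l.flatMap f).length := by
  have := card_nsmul_le_sum (l.map fun a => (f a).length) m fun _ hy => by
    obtain ⟨a, -, rfl⟩ := mem_map.mp hy
    exact hf a
  simpa [length_flatMap] using this

section Iterate

variable {A : Type*} (σ : A → List A)

theorem iterate_applyW (m : ℕ) (w : List A) : (applyW σ)^[m] w = w.flatMap (powL σ m) := by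
  induction m generalizing w with
  | zero => exact (flatMap_singleton' w).symm
  | succ m ih =>
    rw [Function.iterate_succ_apply, ih, applyW, flatMap_assoc]
    congr 1
    funext a
    rw [powL, Function.iterate_succ_apply, ih, applyW, flatMap_singleton]

theorem powL_add (m n : ℕ) (a : A) : powL σ (m + n) a = (powL σ n a).flatMap (powL σ m) := by
  rw [powL, Function.iterate_add_apply, ← iterate_applyW]
  rfl

theorem powL_one (a : A) : powL σ 1 a = σ a := by
  simp [powL, applyW]

theorem powL_succ (m : ℕ) (a : A) : powL σ (m + 1) a = (σ a).flatMap (powL σ m) := by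
  rw [powL_add, powL_one]

theorem powL_succ' (m : ℕ) (a : A) : powL σ (m + 1) a = (powL σ m a).flatMap σ := by
  rw [add_comm, powL_add, show powL σ 1 = σ from funext (powL_one σ)]

theorem mem_powL_add {m n : ℕ} {a b c : A} (hb : b ∈ powL σ n c) (ha : a ∈ powL σ m b) :
    a ∈ powL σ (m + n) c := by
  rw [powL_add]
  exact mem_flatMap.mpr ⟨b, hb, ha⟩

variable {σ}

theorem powL_ne_nil (hne : NonErasing σ) (n : ℕ) (a : A) : powL σ n a ≠ [] := by
  induction n with
  | zero => simp [powL]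
  | succ n ih =>
    rw [powL_succ', Ne, flatMap_eq_nil_iff]
    obtain ⟨b, hb⟩ := exists_mem_of_ne_nil _ ih
    exact fun h => hne b (h b hb)

theorem PrimitiveSub.nonErasing [Nontrivial A] (hσ : PrimitiveSub σ) : NonErasing σ := by
  obtain ⟨k, hk⟩ := hσ
  intro c hc
  cases k with
  | zero =>
    obtain ⟨a, b, hab⟩ := exists_pair_ne A
    have ha := hk a b
    simp only [powL, Function.iterate_zero, id_eq, mem_singleton] at ha
    exact hab ha
  | succ k =>
    have := hk c c
    rw [powL_succ, hc] at this
    exact not_mem_nil this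

/-- A loop `a ∈ σ a` makes both the letters of `σ^m(a)` and the letters `c` with `a ∈ σ^m(c)`
increase with `m`. -/
theorem mem_powL_card_of_mem_self [Fintype A] {k : ℕ} (hk : ∀ b c : A, b ∈ powL σ k c) {a : A}
    (ha : a ∈ σ a) (b : A) : b ∈ powL σ (Fintype.card A) a := by
  let G : Set A → Set A := fun S => {b | ∃ c ∈ S, b ∈ σ c}
  have hG : ∀ m, G^[m] {a} = {b | b ∈ powL σ m a} := by
    intro m
    induction m with
    | zero => ext; simp [powL]
    | succ m ih =>
      rw [Function.iterate_succ_apply', ih]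
      ext b
      simp [G, powL_succ']
  have hmono : Monotone G := fun S T hST b ⟨c, hc, hb⟩ => ⟨c, hST hc, hb⟩
  have hsub := iterate_subset_iterate_card hmono (s := {a}) (by simpa [G] using ha) k
  rw [hG, hG] at hsub
  exact hsub (hk b a)

theorem mem_powL_card_self [Fintype A] {k : ℕ} (hk : ∀ b c : A, b ∈ powL σ k c) {a : A}
    (ha : a ∈ σ a) (c : A) : a ∈ powL σ (Fintype.card A) c := by
  let G : Set A → Set A := fun S => {c | ∃ b ∈ σ c, b ∈ S}
  have hG : ∀ m, G^[m] {a} = {c | a ∈ powL σ m c} := by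
    intro m
    induction m with
    | zero => ext; simp [powL, eq_comm]
    | succ m ih =>
      rw [Function.iterate_succ_apply', ih]
      ext c
      simp [G, powL_succ]
  have hmono : Monotone G := fun S T hST c ⟨b, hb, hbS⟩ => ⟨b, hb, hST hbS⟩
  have hsub := iterate_subset_iterate_card hmono (s := {a}) (by simpa [G] using ha) k
  rw [hG, hG] at hsub
  exact hsub (hk a c)

theorem mem_powL_two_mul_card [Fintype A] (hσ : PrimitiveSub σ) {a : A} (ha : a ∈ σ a)
    (b c : A) : b ∈ powL σ (2 * Fintype.card A) c := by
  obtain ⟨k, hk⟩ := hσ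
  rw [two_mul]
  exact mem_powL_add σ (mem_powL_card_self hk ha c) (mem_powL_card_of_mem_self hk ha b)

end Iterate

section Lengths

variable {A : Type*} [Fintype A]

theorem card_le_length_powL {σ : A → List A} {K : ℕ} (hK : ∀ b c : A, b ∈ powL σ K c) (c : A) :
    Fintype.card A ≤ (powL σ K c).length := by
  classical
  calc Fintype.card A = (Finset.univ : Finset A).card := rfl
    _ ≤ (powL σ K c).toFinset.card := Finset.card_le_card fun b _ => mem_toFinset.mpr (hK b c)
    _ ≤ (powL σ K c).length := toFinset_card_le _

variable (σ : A → List A)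

theorem le_maxLen (n : ℕ) (a : A) : (powL σ n a).length ≤ maxLen σ n :=
  Finset.le_sup (f := fun a => (powL σ n a).length) (Finset.mem_univ a)

theorem maxLen_add_le (m n : ℕ) : maxLen σ (m + n) ≤ maxLen σ n * maxLen σ m :=
  Finset.sup_le fun a _ => by
    rw [powL_add]
    exact (length_flatMap_le (le_maxLen σ m) _).trans (Nat.mul_le_mul_right _ (le_maxLen σ n a))

theorem maxLen_le_pow (n : ℕ) : maxLen σ n ≤ maxLen σ 1 ^ n := by
  induction n with
  | zero => exact Finset.sup_le fun a _ => by simp [powL]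
  | succ n ih =>
    calc maxLen σ (n + 1) ≤ maxLen σ 1 * maxLen σ n := maxLen_add_le σ n 1
      _ ≤ maxLen σ 1 ^ (n + 1) := by rw [pow_succ']; gcongr

variable {σ} in
theorem two_le_maxLen_one [Nontrivial A] {K : ℕ} (hK : ∀ b c : A, b ∈ powL σ K c) :
    2 ≤ maxLen σ 1 := by
  by_contra! h
  have hcard : Fintype.card A ≤ 1 :=
    calc Fintype.card A ≤ (powL σ K (Classical.arbitrary A)).length := card_le_length_powL hK _
      _ ≤ maxLen σ 1 ^ K := (le_maxLen σ K _).trans (maxLen_le_pow σ K)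
      _ ≤ 1 := pow_le_one₀ (Nat.zero_le _) (by omega)
  exact Fintype.one_lt_card.not_ge hcard

variable [Nonempty A]

theorem minLen_le (n : ℕ) (a : A) : minLen σ n ≤ (powL σ n a).length :=
  Finset.inf'_le _ (Finset.mem_univ a)

theorem minLen_zero : minLen σ 0 = 1 := by
  simp [minLen, powL]

theorem minLen_succ_le (m : ℕ) : minLen σ (m + 1) ≤ minLen σ m * maxLen σ 1 := by
  obtain ⟨c, -, hc⟩ :=
    Finset.exists_mem_eq_inf' Finset.univ_nonempty fun a => (powL σ m a).length
  calc minLen σ (m + 1) ≤ (powL σ (m + 1) c).length := minLen_le σ _ c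
    _ ≤ (powL σ m c).length * maxLen σ 1 := by
        rw [powL_succ']
        exact length_flatMap_le (fun a => powL_one σ a ▸ le_maxLen σ 1 a) _
    _ = minLen σ m * maxLen σ 1 := by rw [minLen, hc]

variable {σ}

theorem one_le_minLen (hne : NonErasing σ) (n : ℕ) : 1 ≤ minLen σ n :=
  Finset.le_inf' _ _ fun a _ => length_pos_iff.mpr (powL_ne_nil hne n a)

theorem card_mul_minLen_le {K : ℕ} (hK : ∀ b c : A, b ∈ powL σ K c) (m : ℕ) :
    Fintype.card A * minLen σ m ≤ minLen σ (m + K) :=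
  Finset.le_inf' _ _ fun c _ => by
    rw [powL_add]
    calc Fintype.card A * minLen σ m ≤ (powL σ K c).length * minLen σ m :=
          Nat.mul_le_mul_right _ (card_le_length_powL hK c)
      _ ≤ ((powL σ K c).flatMap (powL σ m)).length := le_length_flatMap (minLen_le σ m) _

/-- Every letter occurs in `σ^K(c)`, in particular the one of longest `σ^m`-image. -/
theorem maxLen_le_minLen_add {K : ℕ} (hK : ∀ b c : A, b ∈ powL σ K c) (m : ℕ) :
    maxLen σ m ≤ minLen σ (m + K) :=
  Finset.le_inf' _ _ fun c _ => by
    obtain ⟨b, -, hb⟩ := Finset.exists_mem_eq_sup Finset.univ Finset.univ_nonempty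
      fun a => (powL σ m a).length
    obtain ⟨s, t, hst⟩ := append_of_mem (hK b c)
    rw [maxLen, hb, powL_add, hst]
    simp only [flatMap_append, flatMap_cons, length_append]
    omega

theorem exists_le_minLen [Nontrivial A] {K : ℕ} (hK : ∀ b c : A, b ∈ powL σ K c)
    (hne : NonErasing σ) (n : ℕ) : ∃ N, n ≤ minLen σ N := by
  refine ⟨n * K, ?_⟩
  induction n with
  | zero => exact Nat.zero_le _
  | succ n ih =>
    have hgrow := card_mul_minLen_le hK (n * K)
    have hcard := Fintype.one_lt_card (α := A)
    have hpos := one_le_minLen hne (n * K)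
    rw [Nat.succ_mul]
    nlinarith

theorem maxLen_le_pow_mul_minLen {K : ℕ} (hK : ∀ b c : A, b ∈ powL σ K c) (hne : NonErasing σ)
    (N : ℕ) : maxLen σ N ≤ maxLen σ 1 ^ K * minLen σ N := by
  rcases lt_or_ge N K with hN | hN
  · have hL : 1 ≤ maxLen σ 1 := (one_le_minLen hne 1).trans
      ((minLen_le σ 1 (Classical.arbitrary A)).trans (le_maxLen σ 1 _))
    calc maxLen σ N ≤ maxLen σ 1 ^ N := maxLen_le_pow σ N
      _ ≤ maxLen σ 1 ^ K := Nat.pow_le_pow_right hL hN.le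
      _ ≤ maxLen σ 1 ^ K * minLen σ N := Nat.le_mul_of_pos_right _ (one_le_minLen hne N)
  · obtain ⟨m, rfl⟩ := Nat.exists_eq_add_of_le' hN
    calc maxLen σ (m + K) ≤ maxLen σ K * maxLen σ m := maxLen_add_le σ m K
      _ ≤ maxLen σ 1 ^ K * minLen σ (m + K) :=
        Nat.mul_le_mul (maxLen_le_pow σ K) (maxLen_le_minLen_add hK m)

end Lengths

section Segments

variable {A : Type*} (x : ℤ → A)

/-- `seg` is stated with `List.range` lifted to `List ℤ` through the list monad; this is the
direct form. -/
theorem seg_def (i j : ℤ) : seg x i j = (range (j - i).toNat).map fun t : ℕ => x (i + t) := by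
  rw [seg, bind_eq_flatMap, map_flatMap]
  exact flatMap_pure_eq_map _ _

theorem length_seg (i j : ℤ) : (seg x i j).length = (j - i).toNat := by
  simp [seg_def]

theorem seg_of_le {i j : ℤ} (h : j ≤ i) : seg x i j = [] := by
  simp [seg_def, Int.toNat_eq_zero.mpr (by omega : j - i ≤ 0)]

theorem seg_succ_right {i j : ℤ} (h : i ≤ j) : seg x i (j + 1) = seg x i j ++ [x j] := by
  rw [seg_def, seg_def, show (j + 1 - i).toNat = (j - i).toNat + 1 by omega, range_succ,
    map_append, map_singleton]
  congr 3
  omega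

theorem seg_append {i j k : ℤ} (hij : i ≤ j) (hjk : j ≤ k) :
    seg x i j ++ seg x j k = seg x i k := by
  induction k, hjk using Int.leInduction with
  | base => rw [seg_of_le x le_rfl, append_nil]
  | succ k hjk ih =>
    rw [seg_succ_right x hjk, seg_succ_right x (hij.trans hjk), ← append_assoc, ih]

theorem seg_single (i : ℤ) : seg x i (i + 1) = [x i] := by
  rw [seg_succ_right x le_rfl, seg_of_le x le_rfl, nil_append]

theorem seg_eq_cons {i j : ℤ} (h : i < j) : seg x i j = x i :: seg x (i + 1) j := by
  rw [← seg_append x (Int.le_add_one le_rfl) h, seg_single, singleton_append]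

theorem take_drop_seg {a b i : ℤ} {n : ℕ} (ha : a ≤ i) (hb : i + n ≤ b) :
    ((seg x a b).drop (i - a).toNat).take n = seg x i (i + n) := by
  rw [← seg_append x ha (by omega : i ≤ b), ← seg_append x (by omega : i ≤ i + n) hb,
    drop_left' (length_seg x a i), take_left' (by rw [length_seg]; omega)]

end Segments

section Blocks

variable {A : Type*} (τ : A → List A) (x : ℤ → A)

theorem F_zero : F τ x 0 = 0 := by
  simp [F, seg_of_le x le_rfl]

theorem F_succ (i : ℤ) : F τ x (i + 1) = F τ x i + (τ (x i)).length := by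
  unfold F
  by_cases hi : 0 ≤ i
  · rw [if_pos (by omega : (0 : ℤ) ≤ i + 1), if_pos hi, seg_succ_right x hi, flatMap_append]
    simp
  · have hseg : seg x i 0 = x i :: seg x (i + 1) 0 := seg_eq_cons x (by omega)
    rw [if_neg hi, hseg, flatMap_cons, length_append]
    by_cases hi' : 0 ≤ i + 1
    · rw [if_pos hi', show i + 1 = 0 by omega, seg_of_le x le_rfl]
      simp
    · rw [if_neg hi']
      push_cast
      ring

theorem F_mono : Monotone (F τ x) :=
  monotone_int_of_le_succ fun i => by rw [F_succ]; omega

theorem F_eq_add_length {i j : ℤ} (h : i ≤ j) :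
    F τ x j = F τ x i + ((seg x i j).flatMap τ).length := by
  induction j, h using Int.leInduction with
  | base => simp [seg_of_le x le_rfl]
  | succ j hij ih =>
    rw [F_succ, ih, seg_succ_right x hij, flatMap_append, length_append, flatMap_singleton]
    push_cast
    ring

theorem F_eq_of_succ {g : ℤ → ℤ} (h0 : g 0 = 0) (hs : ∀ i, g (i + 1) = g i + (τ (x i)).length) :
    g = F τ x := by
  funext i
  induction i using Int.induction_on with
  | zero => rw [h0, F_zero]
  | succ i ih => rw [hs, F_succ, ih]
  | pred i ih =>
    have hg := hs (-i - 1)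
    have hF := F_succ τ x (-i - 1)
    rw [sub_add_cancel] at hg hF
    omega

variable {τ x}

theorem sub_le_F_sub (hne : NonErasing τ) {i j : ℤ} (h : i ≤ j) :
    j - i ≤ F τ x j - F τ x i := by
  have hlen := le_length_flatMap (m := 1) (fun a => length_pos_iff.mpr (hne a)) (seg x i j)
  rw [length_seg, mul_one] at hlen
  rw [F_eq_add_length τ x h]
  omega

theorem exists_F_le_lt (hne : NonErasing τ) (i : ℤ) : ∃ j, F τ x j ≤ i ∧ i < F τ x (j + 1) := by
  obtain ⟨j, hj, hmax⟩ := Int.exists_greatest_of_bdd (P := fun j => F τ x j ≤ i)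
    ⟨max i 0, fun j hj => by
      by_contra! hlt
      have := sub_le_F_sub (x := x) hne (by omega : 0 ≤ j)
      rw [F_zero] at this
      omega⟩
    ⟨min i 0, by
      have := sub_le_F_sub (x := x) hne (min_le_right i 0)
      rw [F_zero] at this
      omega⟩
  exact ⟨j, hj, not_le.mp fun h => by have := hmax _ h; omega⟩

theorem seg_flatMap (hfp : IsFixedPoint τ x) {i j : ℤ} (h : i ≤ j) :
    (seg x i j).flatMap τ = seg x (F τ x i) (F τ x j) := by
  induction j, h using Int.leInduction with
  | base => rw [seg_of_le x le_rfl, seg_of_le x le_rfl, flatMap_nil]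
  | succ j hij ih =>
    rw [seg_succ_right x hij, flatMap_append, ih, flatMap_singleton, ← hfp j,
      seg_append x (F_mono τ x hij) (F_mono τ x (Int.le_add_one le_rfl))]

theorem IsFixedPoint.apply_zero_mem (hfp : IsFixedPoint τ x) (hne : NonErasing τ) :
    x 0 ∈ τ (x 0) := by
  have hseg := hfp 0
  have hpos : 0 < F τ x (0 + 1) := by
    rw [F_succ, F_zero]
    have := length_pos_iff.mpr (hne (x 0))
    omega
  rw [F_zero, seg_eq_cons x hpos] at hseg
  exact hseg ▸ mem_cons_self

end Blocks

section Powers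

variable {A : Type*} {σ : A → List A} {x : ℤ → A}

theorem F_powL_zero : F (powL σ 0) x = id :=
  (F_eq_of_succ _ _ rfl fun i => by simp [powL]).symm

theorem F_powL_succ (hfp : IsFixedPoint σ x) (N : ℕ) :
    F (powL σ (N + 1)) x = F (powL σ N) x ∘ F σ x := by
  refine (F_eq_of_succ _ _ (by simp [F_zero]) fun i => ?_).symm
  rw [Function.comp_apply, Function.comp_apply,
    F_eq_add_length (powL σ N) x (F_mono σ x (Int.le_add_one le_rfl)), hfp i, powL_succ]

theorem isFixedPoint_powL (hfp : IsFixedPoint σ x) (N : ℕ) : IsFixedPoint (powL σ N) x := by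
  induction N with
  | zero =>
    intro i
    rw [F_powL_zero, id, id, seg_single]
    rfl
  | succ N ih =>
    intro i
    rw [F_powL_succ hfp, Function.comp_apply, Function.comp_apply,
      ← seg_flatMap ih (F_mono σ x (Int.le_add_one le_rfl)), hfp i, powL_succ]

end Powers

section Counting

variable {A : Type*} {τ : A → List A} {x : ℤ → A}

theorem FactorOf.exists_eq_take_drop (hfp : IsFixedPoint τ x) (hne : NonErasing τ) {w : List A}
    (hw : FactorOf x w) (hlen : ∀ a, w.length ≤ (τ a).length) :
    ∃ b c t, t < (τ b).length ∧ w = ((τ b ++ τ c).drop t).take w.length := by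
  obtain ⟨i, hi⟩ := hw
  obtain ⟨j, hj, hij⟩ := exists_F_le_lt (x := x) hne i
  have hj₁ := F_succ τ x j
  have hj₂ := F_succ τ x (j + 1)
  have hw₁ := hlen (x (j + 1))
  refine ⟨x j, x (j + 1), (i - F τ x j).toNat, by omega, ?_⟩
  rw [← hfp j, ← hfp (j + 1),
    seg_append x (F_mono τ x (Int.le_add_one le_rfl)) (F_mono τ x (Int.le_add_one le_rfl)),
    take_drop_seg x hj (by omega)]
  exact hi

theorem complexity_le_of_isFixedPoint [Fintype A] (hfp : IsFixedPoint τ x) (hne : NonErasing τ)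
    {M n : ℕ} (hM : ∀ a, (τ a).length ≤ M) (hn : ∀ a, n ≤ (τ a).length) :
    complexity x n ≤ Fintype.card A ^ 2 * M := by
  let g : A × A × Fin M → List A := fun p => ((τ p.1 ++ τ p.2.1).drop p.2.2).take n
  have hsub : {w | FactorOf x w ∧ w.length = n} ⊆ Set.range g := by
    rintro w ⟨hw, rfl⟩
    obtain ⟨b, c, t, ht, hbc⟩ := hw.exists_eq_take_drop hfp hne hn
    exact ⟨(b, c, ⟨t, ht.trans_le (hM b)⟩), hbc.symm⟩
  calc complexity x n ≤ (Set.range g).ncard := Set.ncard_le_ncard hsub (Set.finite_range g)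
    _ ≤ Nat.card (A × A × Fin M) := by
        rw [← Nat.card_coe_set_eq]
        exact Finite.card_range_le g
    _ = Fintype.card A ^ 2 * M := by
        simp [Nat.card_eq_fintype_card, sq, mul_assoc]

end Counting

theorem AperiodicSeq.nontrivial {A : Type*} {x : ℤ → A} (hap : AperiodicSeq x) : Nontrivial A := by
  by_contra h
  rw [not_nontrivial_iff_subsingleton] at h
  exact hap ⟨1, one_pos, fun i => Subsingleton.elim _ _⟩

theorem sq_mul_pow_le_pow {d L : ℕ} (hd : 1 ≤ d) (hL : 2 ≤ L) :
    d ^ 2 * L ^ (2 * d + 1) ≤ L ^ (4 * d ^ 2) :=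
  calc d ^ 2 * L ^ (2 * d + 1) ≤ L ^ d ^ 2 * L ^ (2 * d + 1) :=
        Nat.mul_le_mul_right _ (Nat.lt_two_pow_self.le.trans (Nat.pow_le_pow_left hL _))
    _ = L ^ (d ^ 2 + (2 * d + 1)) := (pow_add _ _ _).symm
    _ ≤ L ^ (4 * d ^ 2) := Nat.pow_le_pow_right (by omega) (by nlinarith)

theorem stmt16_general {A : Type*} [Fintype A] (σ : A → List A)
    (hσ : PrimitiveSub σ) (x : ℤ → A) (hx : Admissible σ x)
    (hap : AperiodicSeq x) :
    ∀ n : ℕ, 1 ≤ n →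
      complexity x n ≤ maxLen σ 1 ^ (4 * Fintype.card A ^ 2) * n := by
  intro n hn
  have hfp : IsFixedPoint σ x := hx.1
  have := hap.nontrivial
  have hne := hσ.nonErasing
  have hK := mem_powL_two_mul_card hσ (hfp.apply_zero_mem hne)
  have hL := two_le_maxLen_one hK
  obtain ⟨N, hnN, hNn⟩ := exists_le_and_le_mul_of_succ_le_mul (minLen_succ_le σ)
    (by rw [minLen_zero]; nlinarith) (exists_le_minLen hK hne n)
  calc complexity x n ≤ Fintype.card A ^ 2 * maxLen σ N :=
        complexity_le_of_isFixedPoint (isFixedPoint_powL hfp N) (powL_ne_nil hne N)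
          (le_maxLen σ N) fun a => hnN.trans (minLen_le σ N a)
    _ ≤ Fintype.card A ^ 2 * (maxLen σ 1 ^ (2 * Fintype.card A) * (maxLen σ 1 * n)) := by
        gcongr
        exact (maxLen_le_pow_mul_minLen hK hne N).trans (by gcongr)
    _ = Fintype.card A ^ 2 * maxLen σ 1 ^ (2 * Fintype.card A + 1) * n := by ring
    _ ≤ maxLen σ 1 ^ (4 * Fintype.card A ^ 2) * n := by
        gcongr
        exact sq_mul_pow_le_pow Fintype.card_pos hL

theorem stmt16 {A : Type*} [Fintype A] [Nonempty A] (σ : A → List A)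
    (hσ : PrimitiveSub σ) (x : ℤ → A) (hx : Admissible σ x)
    (hap : AperiodicSeq x) :
    ∀ n : ℕ, 1 ≤ n →
      complexity x n ≤ maxLen σ 1 ^ (4 * Fintype.card A ^ 2) * n :=
  stmt16_general σ hσ x hx hap
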